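/- Let R > 1 be a real number and let K be a real number with the following property: for every complex Hilbert space H, every bounded invertible linear operator T on H with ‖T‖ ≤ R and ‖T^{-1}‖ ≤ R, and every Laurent polynomial f(z) = Σ_{j=-N}^{N} a_j z^j (a_j ∈ ℂ, N ∈ ℕ), one has ‖f(T)‖ ≤ K · sup_{z ∈ A_R} |f(z)|, where f(T) = Σ_{j=-N}^{N} a_j T^j with T^{-j} = (T^{-1})^j. Then K ≥ 2. In particular, the smallest constant K(R) such that the annulus A_R is a K(R)-spectral set for every bounded invertible operator T with ‖T‖ ≤ R and ‖T^{-1}‖ ≤ R satisfies K(R) ≥ 2 for all R > 1. -/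

import Mathlib

/-- The closed annulus `A_R = {z : 1/R ≤ |z| ≤ R}`. -/
def annulus (R : ℝ) : Set ℂ := {z : ℂ | 1 / R ≤ ‖z‖ ∧ ‖z‖ ≤ R}

/-- Integer powers of an invertible operator `T` with given inverse `Tinv`:
`T^j` for `j ≥ 0` and `(T⁻¹)^{-j}` for `j < 0`. -/
noncomputable def opZpow {H : Type*} [NormedAddCommGroup H] [InnerProductSpace ℂ H]
    (T Tinv : H →L[ℂ] H) (j : ℤ) : H →L[ℂ] H :=
  if 0 ≤ j then T ^ j.toNat else Tinv ^ (-j).toNat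

/-!
On `ℂ^(ℤ/2n)` let `T` be the cyclic weighted shift `e_k ↦ w_k e_(k+1)` with weights `w_k = R` for
`0 ≤ k < n` and `w_k = 1/R` for `n ≤ k < 2n`. Then `‖T‖, ‖T⁻¹‖ ≤ R`, and both `T^n` and `T^(-n)`
carry `e_0` to `R^n e_n`, because `-n = n` in `ℤ/2n`. Hence `‖T^n + T^(-n)‖ ≥ 2 R^n`, while
`|z^n + z^(-n)| ≤ R^n + R^(-n)` on the annulus, so `2 ≤ K (1 + R^(-2n))` for every `n ≥ 1`; let `n → ∞`.
-/

open Finset Filter Topology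

section WeightedShift

variable {ι : Type*} [Fintype ι] [AddCommGroup ι]

noncomputable def weightedShift (g : ι) (w : ι → ℂ) :
    EuclideanSpace ℂ ι →L[ℂ] EuclideanSpace ℂ ι :=
  LinearMap.toContinuousLinearMap
  { toFun := fun x => WithLp.toLp 2 fun k => w (k - g) * x (k - g)
    map_add' := fun x y => by ext k; simp [mul_add]
    map_smul' := fun c x => by ext k; simp; ring }

theorem weightedShift_apply (g : ι) (w : ι → ℂ) (x : EuclideanSpace ℂ ι) (k : ι) :
    weightedShift g w x k = w (k - g) * x (k - g) := rfl

theorem weightedShift_single [DecidableEq ι] (g : ι) (w : ι → ℂ) (i : ι) (c : ℂ) :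
    weightedShift g w (EuclideanSpace.single i c) = EuclideanSpace.single (i + g) (w i * c) := by
  ext k
  simp only [weightedShift_apply, PiLp.single_apply, sub_eq_iff_eq_add]
  split_ifs with h
  · rw [h, add_sub_cancel_right]
  · rw [mul_zero]

theorem weightedShift_pow_single [DecidableEq ι] (g : ι) (w : ι → ℂ) (i : ι) (c : ℂ) (j : ℕ) :
    (weightedShift g w ^ j) (EuclideanSpace.single i c) =
      EuclideanSpace.single (i + j • g) ((∏ l ∈ range j, w (i + l • g)) * c) := by
  induction j with
  | zero => simp
  | succ j ih =>
    rw [pow_succ', mul_apply_eq_comp, ih, weightedShift_single, prod_range_succ,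
      succ_nsmul, add_assoc, mul_left_comm, mul_assoc]

theorem weightedShift_comp_weightedShift_neg {g : ι} {w : ι → ℂ} (hw : ∀ k, w k ≠ 0) :
    weightedShift g w ∘L weightedShift (-g) (fun k => (w (k - g))⁻¹) = 1 := by
  ext x k
  simp only [ContinuousLinearMap.comp_apply, weightedShift_apply, sub_neg_eq_add, sub_add_cancel,
    mul_inv_cancel_left₀ (hw _), one_apply_eq_self]

theorem weightedShift_neg_comp_weightedShift {g : ι} {w : ι → ℂ} (hw : ∀ k, w k ≠ 0) :
    weightedShift (-g) (fun k => (w (k - g))⁻¹) ∘L weightedShift g w = 1 := by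
  ext x k
  simp only [ContinuousLinearMap.comp_apply, weightedShift_apply, sub_neg_eq_add,
    add_sub_cancel_right, inv_mul_cancel_left₀ (hw _), one_apply_eq_self]

theorem norm_weightedShift_le (g : ι) {w : ι → ℂ} {C : ℝ} (hC : 0 ≤ C) (hw : ∀ k, ‖w k‖ ≤ C) :
    ‖weightedShift g w‖ ≤ C := by
  refine ContinuousLinearMap.opNorm_le_bound _ hC fun x => ?_
  refine le_of_sq_le_sq ?_ (by positivity)
  rw [mul_pow, EuclideanSpace.norm_sq_eq, EuclideanSpace.norm_sq_eq, mul_sum]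
  calc ∑ k, ‖weightedShift g w x k‖ ^ 2 = ∑ k, ‖w k‖ ^ 2 * ‖x k‖ ^ 2 := by
        simp only [weightedShift_apply, norm_mul, mul_pow]
        exact (Equiv.subRight g).sum_comp fun k => ‖w k‖ ^ 2 * ‖x k‖ ^ 2
    _ ≤ ∑ k, C ^ 2 * ‖x k‖ ^ 2 := by
        gcongr with k
        exact hw k

end WeightedShift

section TwoBlockShift

variable (R : ℝ) (n : ℕ)

noncomputable def twoBlockWeight (k : ZMod (2 * n)) : ℂ :=
  if k.val < n then (R : ℂ) else (R : ℂ)⁻¹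

noncomputable def twoBlockShift [NeZero n] :
    EuclideanSpace ℂ (ZMod (2 * n)) →L[ℂ] EuclideanSpace ℂ (ZMod (2 * n)) :=
  weightedShift 1 (twoBlockWeight R n)

noncomputable def twoBlockShiftInv [NeZero n] :
    EuclideanSpace ℂ (ZMod (2 * n)) →L[ℂ] EuclideanSpace ℂ (ZMod (2 * n)) :=
  weightedShift (-1) fun k => (twoBlockWeight R n (k - 1))⁻¹

variable {R n}

theorem twoBlockWeight_natCast {l : ℕ} (hl : l < n) : twoBlockWeight R n l = R := by
  rw [twoBlockWeight, ZMod.val_natCast_of_lt (by omega), if_pos hl]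

theorem twoBlockWeight_neg_natCast_succ [NeZero n] {l : ℕ} (hl : l < n) :
    twoBlockWeight R n (-(l + 1 : ℕ)) = (R : ℂ)⁻¹ := by
  have hne : ((l + 1 : ℕ) : ZMod (2 * n)) ≠ 0 := by
    rw [Ne, ZMod.natCast_eq_zero_iff]
    exact Nat.not_dvd_of_pos_of_lt (by omega) (by omega)
  rw [twoBlockWeight, ZMod.neg_val, if_neg hne, ZMod.val_natCast_of_lt (by omega),
    if_neg (by omega)]

theorem twoBlockWeight_ne_zero (hR : R ≠ 0) (k : ZMod (2 * n)) : twoBlockWeight R n k ≠ 0 := by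
  unfold twoBlockWeight
  split_ifs <;> simp [hR]

theorem norm_twoBlockWeight_le (hR : 1 ≤ R) (k : ZMod (2 * n)) : ‖twoBlockWeight R n k‖ ≤ R := by
  have hR₀ : 0 < R := by linarith
  unfold twoBlockWeight
  split_ifs
  · rw [Complex.norm_real, Real.norm_of_nonneg hR₀.le]
  · rw [norm_inv, Complex.norm_real, Real.norm_of_nonneg hR₀.le]
    exact (inv_le_one_of_one_le₀ hR).trans hR

theorem norm_inv_twoBlockWeight_le (hR : 1 ≤ R) (k : ZMod (2 * n)) :
    ‖(twoBlockWeight R n k)⁻¹‖ ≤ R := by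
  have hR₀ : 0 < R := by linarith
  unfold twoBlockWeight
  split_ifs
  · rw [norm_inv, Complex.norm_real, Real.norm_of_nonneg hR₀.le]
    exact (inv_le_one_of_one_le₀ hR).trans hR
  · rw [inv_inv, Complex.norm_real, Real.norm_of_nonneg hR₀.le]

variable [NeZero n]

theorem twoBlockShift_pow_single_zero :
    (twoBlockShift R n ^ n) (EuclideanSpace.single 0 1) =
      EuclideanSpace.single (n : ZMod (2 * n)) ((R : ℂ) ^ n) := by
  have hw : ∀ l ∈ range n, twoBlockWeight R n (0 + l • 1) = R := fun l hl => by
    rw [zero_add, nsmul_one, twoBlockWeight_natCast (mem_range.1 hl)]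
  rw [twoBlockShift, weightedShift_pow_single, prod_congr rfl hw, prod_const, card_range,
    nsmul_one, zero_add, mul_one]

theorem twoBlockShiftInv_pow_single_zero :
    (twoBlockShiftInv R n ^ n) (EuclideanSpace.single 0 1) =
      EuclideanSpace.single (n : ZMod (2 * n)) ((R : ℂ) ^ n) := by
  have hw : ∀ l ∈ range n, (twoBlockWeight R n (0 + l • -1 - 1))⁻¹ = R := fun l hl => by
    rw [zero_add, smul_neg, nsmul_one, ← neg_add', ← Nat.cast_add_one,
      twoBlockWeight_neg_natCast_succ (mem_range.1 hl), inv_inv]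
  have hneg : -((n : ℕ) : ZMod (2 * n)) = n := by
    rw [neg_eq_iff_add_eq_zero, ← Nat.cast_add, ← two_mul, ZMod.natCast_self]
  rw [twoBlockShiftInv, weightedShift_pow_single, prod_congr rfl hw, prod_const, card_range,
    smul_neg, nsmul_one, hneg, zero_add, mul_one]

theorem twoBlockShift_comp_twoBlockShiftInv (hR : R ≠ 0) :
    twoBlockShift R n ∘L twoBlockShiftInv R n = 1 :=
  weightedShift_comp_weightedShift_neg (twoBlockWeight_ne_zero hR)

theorem twoBlockShiftInv_comp_twoBlockShift (hR : R ≠ 0) :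
    twoBlockShiftInv R n ∘L twoBlockShift R n = 1 :=
  weightedShift_neg_comp_weightedShift (twoBlockWeight_ne_zero hR)

theorem norm_twoBlockShift_le (hR : 1 ≤ R) : ‖twoBlockShift R n‖ ≤ R :=
  norm_weightedShift_le _ (by linarith) (norm_twoBlockWeight_le hR)

theorem norm_twoBlockShiftInv_le (hR : 1 ≤ R) : ‖twoBlockShiftInv R n‖ ≤ R :=
  norm_weightedShift_le _ (by linarith) fun k => norm_inv_twoBlockWeight_le hR (k - 1)

theorem two_mul_pow_le_norm_twoBlockShift_pow_add (hR : 0 ≤ R) :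
    2 * R ^ n ≤ ‖twoBlockShift R n ^ n + twoBlockShiftInv R n ^ n‖ := by
  have h := (twoBlockShift R n ^ n + twoBlockShiftInv R n ^ n).le_opNorm (EuclideanSpace.single 0 1)
  rwa [add_apply, twoBlockShift_pow_single_zero,
    twoBlockShiftInv_pow_single_zero, ← PiLp.single_add, PiLp.norm_single, PiLp.norm_single,
    norm_one, mul_one, ← two_mul, norm_mul, norm_pow, Complex.norm_real, Real.norm_of_nonneg hR,
    Complex.norm_two] at h

end TwoBlockShift

theorem opZpow_natCast {H : Type*} [NormedAddCommGroup H] [InnerProductSpace ℂ H]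
    (T Tinv : H →L[ℂ] H) (n : ℕ) : opZpow T Tinv n = T ^ n := by
  rw [opZpow, if_pos n.cast_nonneg, Int.toNat_natCast]

theorem opZpow_neg_natCast {H : Type*} [NormedAddCommGroup H] [InnerProductSpace ℂ H]
    (T Tinv : H →L[ℂ] H) (n : ℕ) : opZpow T Tinv (-n) = Tinv ^ n := by
  rcases n.eq_zero_or_pos with rfl | hn
  · simp [opZpow]
  · rw [opZpow, if_neg (by omega), neg_neg, Int.toNat_natCast]

theorem sum_Icc_ite_mem_pair {M : Type*} [AddCommMonoid M] {n : ℕ} (hn : n ≠ 0) (F : ℤ → M) :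
    ∑ j ∈ Icc (-(n : ℤ)) n, (if j ∈ ({(n : ℤ), -(n : ℤ)} : Finset ℤ) then F j else 0) =
      F n + F (-n) := by
  have hsub : ({(n : ℤ), -(n : ℤ)} : Finset ℤ) ⊆ Icc (-(n : ℤ)) n := by
    intro j hj
    simp only [mem_insert, mem_singleton] at hj
    simp only [mem_Icc]
    omega
  rw [sum_ite_mem, inter_eq_right.2 hsub, sum_pair (by omega)]

theorem add_inv_le_add_inv {s S : ℝ} (hs : 0 < s) (hsS : s ≤ S) (hSs : S⁻¹ ≤ s) :
    s + s⁻¹ ≤ S + S⁻¹ := by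
  have hS : 0 < S := hs.trans_le hsS
  have h1 : 1 ≤ s * S := by rwa [inv_le_iff_one_le_mul₀ hS] at hSs
  have hdiff : S + S⁻¹ - (s + s⁻¹) = (S - s) * (s * S - 1) / (s * S) := by
    field_simp
    ring
  have hnonneg : 0 ≤ (S - s) * (s * S - 1) / (s * S) :=
    div_nonneg (mul_nonneg (by linarith) (by linarith)) (by positivity)
  linarith

theorem norm_zpow_add_zpow_neg_le {R : ℝ} (hR : 0 < R) {z : ℂ} (hz : z ∈ annulus R) (n : ℕ) :
    ‖z ^ (n : ℤ) + z ^ (-(n : ℤ))‖ ≤ R ^ n + (R ^ n)⁻¹ := by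
  obtain ⟨hz_lower, hz_upper⟩ := hz
  have hz : 0 < ‖z‖ := lt_of_lt_of_le (by positivity) hz_lower
  calc ‖z ^ (n : ℤ) + z ^ (-(n : ℤ))‖ ≤ ‖z‖ ^ n + (‖z‖ ^ n)⁻¹ := by
        rw [zpow_neg, zpow_natCast, ← norm_pow, ← norm_inv]
        exact norm_add_le _ _
    _ ≤ R ^ n + (R ^ n)⁻¹ := by
        refine add_inv_le_add_inv (by positivity) (by gcongr) ?_
        rw [← inv_pow]
        exact pow_le_pow_left₀ (by positivity) (by rwa [inv_eq_one_div]) n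

theorem two_le_of_forall_two_mul_pow_le {R K : ℝ} (hR : 1 < R)
    (h : ∀ n : ℕ, n ≠ 0 → 2 * R ^ n ≤ K * (R ^ n + (R ^ n)⁻¹)) : 2 ≤ K := by
  have hlim : Tendsto (fun n : ℕ => K * (1 + (R ^ 2)⁻¹ ^ n)) atTop (𝓝 (K * (1 + 0))) :=
    (tendsto_pow_atTop_nhds_zero_of_lt_one (by positivity)
      (inv_lt_one_of_one_lt₀ (by nlinarith))).const_add 1 |>.const_mul K
  rw [add_zero, mul_one] at hlim
  refine ge_of_tendsto hlim (eventually_ne_atTop 0 |>.mono fun n hn => ?_)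
  have hRn : 0 < R ^ n := by positivity
  have e : K * (R ^ n + (R ^ n)⁻¹) = K * (1 + (R ^ 2)⁻¹ ^ n) * R ^ n := by
    rw [inv_pow, ← pow_mul, mul_comm 2 n, pow_mul]
    field_simp
  exact le_of_mul_le_mul_right (e ▸ h n hn) hRn

/-- Suppose `K` is such that for every complex Hilbert space `H`, every bounded
invertible operator `T` on `H` with `‖T‖ ≤ R`, `‖T⁻¹‖ ≤ R`, and every Laurent
polynomial `f(z) = ∑_{j=-N}^{N} a_j z^j`, one has
`‖f(T)‖ ≤ K · sup_{z ∈ A_R} |f(z)|`.  Then `K ≥ 2`.  In particular, the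
optimal spectral constant `K(R)` of the annulus satisfies `K(R) ≥ 2`. -/
theorem annulus_spectral_constant_ge_two (R : ℝ) (hR : 1 < R) (K : ℝ)
    (hK : ∀ (H : Type) [NormedAddCommGroup H] [InnerProductSpace ℂ H] [CompleteSpace H]
        (T Tinv : H →L[ℂ] H), T ∘L Tinv = 1 → Tinv ∘L T = 1 → ‖T‖ ≤ R → ‖Tinv‖ ≤ R →
      ∀ (N : ℕ) (a : ℤ → ℂ),
        ‖∑ j ∈ Finset.Icc (-(N : ℤ)) (N : ℤ), a j • opZpow T Tinv j‖ ≤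
          K * sSup ((fun z : ℂ =>
            ‖∑ j ∈ Finset.Icc (-(N : ℤ)) (N : ℤ), a j * z ^ j‖) '' annulus R)) :
    2 ≤ K := by
  have hR₀ : 0 < R := by linarith
  refine two_le_of_forall_two_mul_pow_le hR fun n hn => ?_
  have : NeZero n := ⟨hn⟩
  have hf := hK _ (twoBlockShift R n) (twoBlockShiftInv R n)
    (twoBlockShift_comp_twoBlockShiftInv hR₀.ne') (twoBlockShiftInv_comp_twoBlockShift hR₀.ne')
    (norm_twoBlockShift_le hR.le) (norm_twoBlockShiftInv_le hR.le) n
    fun j => if j ∈ ({(n : ℤ), -(n : ℤ)} : Finset ℤ) then 1 else 0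
  simp only [ite_smul, ite_mul, one_smul, one_mul, zero_smul, zero_mul, sum_Icc_ite_mem_pair hn,
    opZpow_natCast, opZpow_neg_natCast] at hf
  set S := sSup ((fun z : ℂ => ‖z ^ (n : ℤ) + z ^ (-(n : ℤ))‖) '' annulus R)
  have hS : S ≤ R ^ n + (R ^ n)⁻¹ :=
    Real.sSup_le (by rintro _ ⟨z, hz, rfl⟩; exact norm_zpow_add_zpow_neg_le hR₀ hz n)
      (by positivity)
  have hlow : 2 * R ^ n ≤ _ := two_mul_pow_le_norm_twoBlockShift_pow_add hR₀.le
  have hS₀ : 0 ≤ S := Real.sSup_nonneg (by rintro _ ⟨z, -, rfl⟩; exact norm_nonneg _)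
  have hK₀ : 0 ≤ K := (pos_of_mul_pos_left (lt_of_lt_of_le (by positivity) (hlow.trans hf)) hS₀).le
  calc 2 * R ^ n ≤ _ := hlow
    _ ≤ K * S := hf
    _ ≤ K * (R ^ n + (R ^ n)⁻¹) := by gcongr
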